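/- arXiv:2403.06132 — 6 statements merged into one kernel-verified Lean document; each statement's English description precedes it below -/
import Mathlib

section
/- Let G be a connected graph and H a 3-induced subgraph of G (i.e., for all x,y in V(H), if d_G(x,y) ≤ 3 then d_H(x,y) = d_G(x,y)). If the 3-distance graph D_3(H) is connected, and for every vertex x in V(G)\V(H) there exists y in V(H) with d_G(x,y) ≥ 3, then D_3(G) is connected. -/
/-!
Because `H` is 3-induced, every edge of `D₃(H)` joins two vertices at `G`-distance 3, so `V(H)`
lies in a single component of `D₃(G)`, and `H` itself is connected. A vertex `w ∉ V(H)` within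
distance 3 of `H` also has a vertex of `H` at distance at least 3; along a walk in `H` between the
two, the distance from `w` passes through exactly 3, so `w` is `D₃(G)`-adjacent to `V(H)`. A
vertex farther from some `y ∈ V(H)` jumps along a geodesic towards `y` to a vertex at distance 3
that is closer to `y`, and induction on the distance to `y` finishes.
-/

open SimpleGraph

/-- The `k`-distance graph of `G`: vertices adjacent iff their distance in `G` is exactly `k`. -/
def distGraph {V : Type*} (G : SimpleGraph V) (k : ℕ) : SimpleGraph V where
  Adj x y := x ≠ y ∧ G.dist x y = k
  symm := ⟨fun x y ⟨h1, h2⟩ => ⟨h1.symm, by rwa [SimpleGraph.dist_comm]⟩⟩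
  loopless := ⟨fun x ⟨h, _⟩ => h rfl⟩

namespace SimpleGraph

variable {V : Type*} {G : SimpleGraph V}

lemma Reachable.exists_dist_eq_and_dist_eq_sub {u v : V} (h : G.Reachable u v) {k : ℕ}
    (hk : k ≤ G.dist u v) : ∃ w, G.dist u w = k ∧ G.dist w v = G.dist u v - k := by
  obtain ⟨p, hp⟩ := h.exists_walk_length_eq_dist
  have hw₁ : G.dist u (p.getVert k) ≤ k := by
    simpa [Walk.take_length, hp, hk] using dist_le (p.take k)
  have hw₂ : G.dist (p.getVert k) v ≤ G.dist u v - k := by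
    simpa [Walk.drop_length, hp] using dist_le (p.drop k)
  have := (p.take k).reachable.dist_triangle_left v
  exact ⟨p.getVert k, by omega, by omega⟩

/-- Discrete intermediate value theorem: distances from `u` change by at most one along an edge. -/
lemma Walk.exists_mem_support_dist_eq {v w : V} (p : G.Walk v w) {u : V} {k : ℕ}
    (hv : G.dist u v ≤ k) (hw : k ≤ G.dist u w) : ∃ x ∈ p.support, G.dist u x = k := by
  induction p with
  | nil => exact ⟨_, Walk.start_mem_support _, by omega⟩
  | @cons v' v'' _ hadj q ih =>
    by_cases hk : G.dist u v' = k
    · exact ⟨_, Walk.start_mem_support _, hk⟩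
    · have hstep : G.dist u v'' ≤ G.dist u v' + 1 := by
        rcases hadj.diff_dist_adj (u := u) with h | h | h <;> omega
      obtain ⟨x, hx, hxk⟩ := ih (by omega) hw
      exact ⟨x, List.mem_cons_of_mem _ hx, hxk⟩

lemma Reachable.of_forall_adj_reachable {G' : SimpleGraph V}
    (h : ∀ u v, G.Adj u v → G'.Reachable u v) {u v : V} (huv : G.Reachable u v) :
    G'.Reachable u v := by
  obtain ⟨p⟩ := huv
  induction p with
  | nil => rfl
  | cons hadj _ ih => exact (h _ _ hadj).trans ih

lemma Preconnected.of_distGraph {k : ℕ} (hk : k ≠ 0) (h : (distGraph G k).Preconnected) :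
    G.Preconnected := fun u v =>
  (h u v).of_forall_adj_reachable fun _ _ hadj => Reachable.of_dist_ne_zero (hadj.2 ▸ hk)

lemma distGraph_adj_of_dist_eq {k : ℕ} (hk : k ≠ 0) {u v : V} (h : G.dist u v = k) :
    (distGraph G k).Adj u v :=
  ⟨by rintro rfl; exact hk (h ▸ dist_self), h⟩

lemma exists_mem_reachable_distGraph_of_exists_dist_eq (hG : G.Connected) {S : Set V} {k : ℕ}
    (hk : k ≠ 0) (hS : ∀ w ∉ S, ∀ y ∈ S, G.dist w y ≤ k → ∃ z ∈ S, G.dist w z = k)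
    (u : V) {y : V} (hy : y ∈ S) : ∃ z ∈ S, (distGraph G k).Reachable u z := by
  induction hn : G.dist u y using Nat.strong_induction_on generalizing u with
  | _ n ih =>
    by_cases hu : u ∈ S
    · exact ⟨u, hu, .rfl⟩
    by_cases hnear : n ≤ k
    · obtain ⟨z, hz, huz⟩ := hS u hu y hy (hn ▸ hnear)
      exact ⟨z, hz, (distGraph_adj_of_dist_eq hk huz).reachable⟩
    · obtain ⟨w, huw, hwy⟩ :=
        (hG.preconnected u y).exists_dist_eq_and_dist_eq_sub (k := k) (by omega)
      obtain ⟨z, hz, hwz⟩ := ih _ (by omega) w rfl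
      exact ⟨z, hz, (distGraph_adj_of_dist_eq hk huw).reachable.trans hwz⟩

namespace Subgraph

/-- The paper's `k`-induced subgraphs. -/
def IsDistInduced (H : G.Subgraph) (k : ℕ) : Prop :=
  ∀ x y : H.verts, G.dist x y ≤ k → H.coe.dist x y = G.dist x y

lemma dist_le_dist_coe {H : G.Subgraph} {a b : H.verts} (h : H.coe.Reachable a b) :
    G.dist a b ≤ H.coe.dist a b := by
  obtain ⟨p, hp⟩ := h.exists_walk_length_eq_dist
  rw [← hp, ← Walk.length_map H.hom]
  exact dist_le _

lemma Preconnected.exists_mem_verts_dist_eq {H : G.Subgraph} (hH : H.Preconnected)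
    {x y u : V} (hx : x ∈ H.verts) (hy : y ∈ H.verts) {k : ℕ}
    (hux : G.dist u x ≤ k) (huy : k ≤ G.dist u y) : ∃ z ∈ H.verts, G.dist u z = k := by
  obtain ⟨p⟩ := hH ⟨x, hx⟩ ⟨y, hy⟩
  obtain ⟨z, hz, hzk⟩ := (p.map H.hom).exists_mem_support_dist_eq hux huy
  obtain ⟨z', -, rfl⟩ := List.mem_map.mp (Walk.support_map _ _ ▸ hz)
  exact ⟨z', z'.2, hzk⟩

lemma IsDistInduced.distGraph_adj {H : G.Subgraph} {k : ℕ} (hH : H.IsDistInduced k) (hk : k ≠ 0)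
    {a b : H.verts} (hab : (distGraph H.coe k).Adj a b) : (distGraph G k).Adj a b := by
  obtain ⟨hne, hdist⟩ := hab
  have hle := dist_le_dist_coe (.of_dist_ne_zero (hdist ▸ hk) : H.coe.Reachable a b)
  have := hH a b (by omega)
  exact ⟨Subtype.coe_injective.ne hne, by omega⟩

end Subgraph

end SimpleGraph

/-- If `H` is a 3-induced subgraph of a connected graph `G`, `D₃(H)` is connected,
and every vertex of `G` outside `H` has some vertex of `H` at distance ≥ 3, then `D₃(G)` is
connected. -/
theorem stmt_0 {V : Type*} (G : SimpleGraph V) (hG : G.Connected) (H : G.Subgraph)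
    (h3ind : ∀ x y : H.verts, G.dist x y ≤ 3 → H.coe.dist x y = G.dist x y)
    (hH : (distGraph H.coe 3).Connected)
    (hfar : ∀ x : V, x ∉ H.verts → ∃ y ∈ H.verts, 3 ≤ G.dist x y) :
    (distGraph G 3).Connected := by
  have hH_reach (a b : H.verts) : (distGraph G 3).Reachable a b :=
    (hH.preconnected a b).map
      ⟨Subtype.val, Subgraph.IsDistInduced.distGraph_adj h3ind three_ne_zero⟩
  have hH_pre : H.Preconnected := ⟨hH.preconnected.of_distGraph three_ne_zero⟩
  have hexact (w : V) (hw : w ∉ H.verts) (y : V) (hy : y ∈ H.verts) (hwy : G.dist w y ≤ 3) :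
      ∃ z ∈ H.verts, G.dist w z = 3 :=
    have ⟨_, hy', hwy'⟩ := hfar w hw
    hH_pre.exists_mem_verts_dist_eq hy hy' hwy hwy'
  obtain ⟨y, hy⟩ := hH.nonempty
  have hto_H (u : V) : ∃ z ∈ H.verts, (distGraph G 3).Reachable u z :=
    exists_mem_reachable_distGraph_of_exists_dist_eq hG three_ne_zero hexact u hy
  refine (connected_iff _).mpr ⟨fun u v => ?_, hG.nonempty⟩
  obtain ⟨a, ha, hua⟩ := hto_H u
  obtain ⟨b, hb, hvb⟩ := hto_H v
  exact hua.trans ((hH_reach ⟨a, ha⟩ ⟨b, hb⟩).trans hvb.symm)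
end

section
/- Let H_t be the graph consisting of a path u_0 u_1 ... u_t together with vertices a_1, a_2, a_3 attached so that a_1 a_2 u_0 is a path and a_3 is adjacent to u_0, and vertices b_1, b_2, b_3 attached so that b_1 b_2 u_t is a path and b_3 is adjacent to u_t. If t ≡ 1 (mod 3) or t ≡ 2 (mod 3), then D_3(H_t) is connected. -/
open SimpleGraph

/-- The tree `H_t` on `t+7` vertices: a path `u_0, …, u_t` (indices `3, …, 3+t`),
a pendant path `a_1-a_2-u_0` (`a_1 = 0`, `a_2 = 1`), a pendant vertex `a_3 = 2` at `u_0`,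
a pendant path `b_1-b_2-u_t` (`b_1 = t+5`, `b_2 = t+4`), and a pendant vertex `b_3 = t+6`
at `u_t`. -/
def Hgraph (t : ℕ) : SimpleGraph (Fin (t + 7)) :=
  SimpleGraph.fromRel (fun i j =>
    (i.val = 0 ∧ j.val = 1) ∨ (i.val = 1 ∧ j.val = 3) ∨ (i.val = 2 ∧ j.val = 3) ∨
    (∃ k < t, i.val = 3 + k ∧ j.val = 4 + k) ∨
    (i.val = 3 + t ∧ j.val = t + 4) ∨ (i.val = t + 4 ∧ j.val = t + 5) ∨
    (i.val = 3 + t ∧ j.val = t + 6))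

/-- Linear-arithmetic form of the edge relation of `Hgraph t`. -/
def Frel (t a b : ℕ) : Prop :=
  (a = 0 ∧ b = 1) ∨ (a = 1 ∧ b = 3) ∨ (a = 2 ∧ b = 3) ∨
  (3 ≤ a ∧ a < 3 + t ∧ b = a + 1) ∨
  (a = 3 + t ∧ b = t + 4) ∨ (a = t + 4 ∧ b = t + 5) ∨ (a = 3 + t ∧ b = t + 6)

lemma Hadj_iff (t : ℕ) (i j : Fin (t + 7)) :
    (Hgraph t).Adj i j ↔ i.val ≠ j.val ∧ (Frel t i.val j.val ∨ Frel t j.val i.val) := by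
  have hsp : ∀ a b : Fin (t + 7), (∃ k < t, a.val = 3 + k ∧ b.val = 4 + k) ↔
      (3 ≤ a.val ∧ a.val < 3 + t ∧ b.val = a.val + 1) := by
    intro a b
    constructor
    · rintro ⟨k, hk, h1, h2⟩; omega
    · rintro ⟨h1, h2, h3⟩; exact ⟨a.val - 3, by omega, by omega, by omega⟩
  rw [Hgraph, SimpleGraph.fromRel_adj, hsp i j, hsp j i, Fin.ne_iff_vne]
  rfl

lemma Hadj_mk_iff (t a b : ℕ) (ha : a < t + 7) (hb : b < t + 7) :
    (Hgraph t).Adj ⟨a, ha⟩ ⟨b, hb⟩ ↔ a ≠ b ∧ (Frel t a b ∨ Frel t b a) :=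
  Hadj_iff t ⟨a, ha⟩ ⟨b, hb⟩

lemma dist_eq_three' {V : Type*} (G : SimpleGraph V) {x y : V} (w : G.Walk x y)
    (hw : w.length = 3) (hxy : x ≠ y) (hna : ¬ G.Adj x y)
    (hcn : ∀ z, ¬ (G.Adj x z ∧ G.Adj z y)) : G.dist x y = 3 := by
  have hr : G.Reachable x y := ⟨w⟩
  have hle : G.dist x y ≤ 3 := hw ▸ SimpleGraph.dist_le w
  obtain ⟨p, hp⟩ := hr.exists_walk_length_eq_dist
  have h0 : G.dist x y ≠ 0 := by
    intro h
    rw [h] at hp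
    exact hxy (SimpleGraph.Walk.eq_of_length_eq_zero hp)
  have h1 : G.dist x y ≠ 1 := by
    intro h
    rw [h] at hp
    cases p with
    | nil => simp at hp
    | cons ha q =>
      cases q with
      | nil => exact hna ha
      | cons hb q' => simp at hp
  have h2 : G.dist x y ≠ 2 := by
    intro h
    rw [h] at hp
    cases p with
    | nil => simp at hp
    | cons ha q =>
      cases q with
      | nil => simp at hp
      | cons hb q' =>
        cases q' with
        | nil => exact hcn _ ⟨ha, hb⟩
        | cons hc q'' => simp at hp
  omega

/-- Unbundled reachability in `D₃(H_t)` between natural-number labels. -/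
def Rch (t n m : ℕ) : Prop :=
  ∀ (hn : n < t + 7) (hm : m < t + 7),
    (distGraph (Hgraph t) 3).Reachable ⟨n, hn⟩ ⟨m, hm⟩

lemma Rch.refl (t n : ℕ) : Rch t n n := fun _ _ => Reachable.refl _

lemma Rch.symm {t n m : ℕ} (h : Rch t n m) : Rch t m n :=
  fun h1 h2 => (h h2 h1).symm

lemma Rch.trans {t n m p : ℕ} (h1 : Rch t n m) (hm : m < t + 7) (h2 : Rch t m p) :
    Rch t n p :=
  fun ha hb => (h1 ha hm).trans (h2 hm hb)

/-- Key lemma: make a `D₃` edge from a length-3 walk plus arithmetic facts. -/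
lemma key (t a b c d : ℕ) (hb : b < t + 7) (hc : c < t + 7)
    (h1 : a ≠ b ∧ (Frel t a b ∨ Frel t b a))
    (h2 : b ≠ c ∧ (Frel t b c ∨ Frel t c b))
    (h3 : c ≠ d ∧ (Frel t c d ∨ Frel t d c))
    (had : a ≠ d)
    (hna : ¬ (Frel t a d ∨ Frel t d a))
    (hcn : ∀ z, z < t + 7 →
      ¬ ((Frel t a z ∨ Frel t z a) ∧ (Frel t z d ∨ Frel t d z))) :
    Rch t a d := by
  intro hn hm
  have adj1 : (Hgraph t).Adj ⟨a, hn⟩ ⟨b, hb⟩ := (Hadj_mk_iff t a b hn hb).mpr h1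
  have adj2 : (Hgraph t).Adj ⟨b, hb⟩ ⟨c, hc⟩ := (Hadj_mk_iff t b c hb hc).mpr h2
  have adj3 : (Hgraph t).Adj ⟨c, hc⟩ ⟨d, hm⟩ := (Hadj_mk_iff t c d hc hm).mpr h3
  have hne : (⟨a, hn⟩ : Fin (t + 7)) ≠ ⟨d, hm⟩ := Fin.ne_of_val_ne had
  have hna' : ¬ (Hgraph t).Adj ⟨a, hn⟩ ⟨d, hm⟩ := by
    intro h
    exact hna ((Hadj_mk_iff t a d hn hm).mp h).2
  have hcn' : ∀ z, ¬ ((Hgraph t).Adj ⟨a, hn⟩ z ∧ (Hgraph t).Adj z ⟨d, hm⟩) := by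
    rintro ⟨zv, hz⟩ ⟨hA, hB⟩
    exact hcn zv hz ⟨((Hadj_mk_iff t a zv hn hz).mp hA).2,
      ((Hadj_mk_iff t zv d hz hm).mp hB).2⟩
  exact SimpleGraph.Adj.reachable
    ⟨hne, dist_eq_three' _ (Walk.cons adj1 (Walk.cons adj2 (Walk.cons adj3 Walk.nil)))
      rfl hne hna' hcn'⟩

set_option maxHeartbeats 1000000 in
lemma spine_step (t k : ℕ) (h : k + 3 ≤ t) : Rch t (3 + k) (3 + (k + 3)) :=
  key t (3 + k) (4 + k) (5 + k) (3 + (k + 3)) (by omega) (by omega)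
    (by unfold Frel; omega) (by unfold Frel; omega)
    (by unfold Frel; omega) (by omega)
    (by unfold Frel; omega)
    (by intro z hz; unfold Frel; omega)

lemma spine_reach (t : ℕ) : ∀ k, k ≤ t → Rch t (3 + k % 3) (3 + k) := by
  intro k
  induction k using Nat.strong_induction_on with
  | _ k ih =>
    intro hk
    rcases Nat.lt_or_ge k 3 with h | h
    · rw [Nat.mod_eq_of_lt h]
      exact Rch.refl t (3 + k)
    · have ihr := ih (k - 3) (by omega) (by omega)
      rw [show k % 3 = (k - 3) % 3 by omega]
      have step := spine_step t (k - 3) (by omega)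
      rw [show (k - 3) + 3 = k by omega] at step
      exact ihr.trans (by omega) step

set_option maxHeartbeats 1000000 in
lemma E_a1u1 (t : ℕ) (h : 1 ≤ t) : Rch t 0 4 :=
  key t 0 1 3 4 (by omega) (by omega)
    (by unfold Frel; omega) (by unfold Frel; omega)
    (by unfold Frel; omega) (by omega) (by unfold Frel; omega)
    (by intro z hz; unfold Frel; omega)

set_option maxHeartbeats 1000000 in
lemma E_a1a3 (t : ℕ) : Rch t 0 2 :=
  key t 0 1 3 2 (by omega) (by omega)
    (by unfold Frel; omega) (by unfold Frel; omega)
    (by unfold Frel; omega) (by omega) (by unfold Frel; omega)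
    (by intro z hz; unfold Frel; omega)

set_option maxHeartbeats 1000000 in
lemma E_a3u2 (t : ℕ) (h : 1 ≤ t) : Rch t 2 5 :=
  key t 2 3 4 5 (by omega) (by omega)
    (by unfold Frel; omega) (by unfold Frel; omega)
    (by unfold Frel; omega) (by omega) (by unfold Frel; omega)
    (by intro z hz; unfold Frel; omega)

set_option maxHeartbeats 1000000 in
lemma E_a2u2 (t : ℕ) (h : 1 ≤ t) : Rch t 1 5 :=
  key t 1 3 4 5 (by omega) (by omega)
    (by unfold Frel; omega) (by unfold Frel; omega)
    (by unfold Frel; omega) (by omega) (by unfold Frel; omega)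
    (by intro z hz; unfold Frel; omega)

set_option maxHeartbeats 1000000 in
lemma E_b1u (t : ℕ) (h : 1 ≤ t) : Rch t (t+5) (t+2) :=
  key t (t+5) (t+4) (t+3) (t+2) (by omega) (by omega)
    (by unfold Frel; omega) (by unfold Frel; omega)
    (by unfold Frel; omega) (by omega) (by unfold Frel; omega)
    (by intro z hz; unfold Frel; omega)

set_option maxHeartbeats 1000000 in
lemma E_b1b3 (t : ℕ) : Rch t (t+5) (t+6) :=
  key t (t+5) (t+4) (t+3) (t+6) (by omega) (by omega)
    (by unfold Frel; omega) (by unfold Frel; omega)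
    (by unfold Frel; omega) (by omega) (by unfold Frel; omega)
    (by intro z hz; unfold Frel; omega)

set_option maxHeartbeats 1000000 in
lemma E_b3u (t : ℕ) (h : 1 ≤ t) : Rch t (t+6) (t+1) :=
  key t (t+6) (t+3) (t+2) (t+1) (by omega) (by omega)
    (by unfold Frel; omega) (by unfold Frel; omega)
    (by unfold Frel; omega) (by omega) (by unfold Frel; omega)
    (by intro z hz; unfold Frel; omega)

set_option maxHeartbeats 1000000 in
lemma E_b2u (t : ℕ) (h : 1 ≤ t) : Rch t (t+4) (t+1) :=
  key t (t+4) (t+3) (t+2) (t+1) (by omega) (by omega)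
    (by unfold Frel; omega) (by unfold Frel; omega)
    (by unfold Frel; omega) (by omega) (by unfold Frel; omega)
    (by intro z hz; unfold Frel; omega)

/-- If `t ≡ 1 (mod 3)` or `t ≡ 2 (mod 3)`, then `D₃(H_t)` is connected. -/
theorem stmt_2 (t : ℕ) (ht : t % 3 = 1 ∨ t % 3 = 2) :
    (distGraph (Hgraph t) 3).Connected := by
  have ht1 : 1 ≤ t := by omega
  have h45 : Rch t 4 5 :=
    ((E_a1u1 t ht1).symm.trans (by omega) (E_a1a3 t)).trans (by omega) (E_a3u2 t ht1)
  have hb : Rch t (t + 2) (t + 1) :=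
    ((E_b1u t ht1).symm.trans (by omega) (E_b1b3 t)).trans (by omega) (E_b3u t ht1)
  have h35 : Rch t 3 5 := by
    rcases ht with h1 | h2
    · have s1 := spine_reach t (t - 1) (by omega)
      rw [show 3 + (t - 1) % 3 = 3 by omega, show 3 + (t - 1) = t + 2 by omega] at s1
      have h3t1 : Rch t 3 (t + 1) := s1.trans (by omega) hb
      rcases Nat.lt_or_ge t 2 with h | h
      · rw [show t + 1 = 2 by omega] at h3t1
        exact h3t1.trans (by omega) (E_a3u2 t ht1)
      · have s2 := spine_reach t (t - 2) (by omega)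
        rw [show 3 + (t - 2) % 3 = 5 by omega, show 3 + (t - 2) = t + 1 by omega] at s2
        exact h3t1.trans (by omega) s2.symm
    · have s1 := spine_reach t (t - 2) (by omega)
      rw [show 3 + (t - 2) % 3 = 3 by omega, show 3 + (t - 2) = t + 1 by omega] at s1
      have s2 := spine_reach t (t - 1) (by omega)
      rw [show 3 + (t - 1) % 3 = 4 by omega, show 3 + (t - 1) = t + 2 by omega] at s2
      exact ((s1.trans (by omega) hb.symm).trans (by omega) s2.symm).trans (by omega) h45
  have h34 : Rch t 3 4 := h35.trans (by omega) h45.symm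
  have huk : ∀ k, k ≤ t → Rch t (3 + k) 3 := by
    intro k hk
    have hs := spine_reach t k hk
    refine Rch.symm (Rch.trans ?_ (by omega) hs)
    have hm : k % 3 = 0 ∨ k % 3 = 1 ∨ k % 3 = 2 := by omega
    rcases hm with h | h | h <;> rw [h]
    · exact Rch.refl t 3
    · exact h34
    · exact h35
  have hvt1 : Rch t (t + 1) 3 := by
    rcases Nat.lt_or_ge t 2 with h | h
    · rw [show t + 1 = 2 by omega]
      exact (E_a3u2 t ht1).trans (by omega) h35.symm
    · have h2 := huk (t - 2) (by omega)
      rw [show 3 + (t - 2) = t + 1 by omega] at h2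
      exact h2
  have hvt2 : Rch t (t + 2) 3 := by
    have h2 := huk (t - 1) (by omega)
    rw [show 3 + (t - 1) = t + 2 by omega] at h2
    exact h2
  have hall : ∀ n, n < t + 7 → Rch t n 3 := by
    intro n hn
    have hc : n = 0 ∨ n = 1 ∨ n = 2 ∨ (3 ≤ n ∧ n ≤ 3 + t) ∨ n = t + 4 ∨ n = t + 5 ∨
        n = t + 6 := by omega
    rcases hc with rfl | rfl | rfl | ⟨hn1, hn2⟩ | rfl | rfl | rfl
    · exact (E_a1u1 t ht1).trans (by omega) h34.symm
    · exact (E_a2u2 t ht1).trans (by omega) h35.symm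
    · exact (E_a3u2 t ht1).trans (by omega) h35.symm
    · rw [show n = 3 + (n - 3) by omega]
      exact huk (n - 3) (by omega)
    · exact (E_b2u t ht1).trans (by omega) hvt1
    · exact (E_b1u t ht1).trans (by omega) hvt2
    · exact (E_b3u t ht1).trans (by omega) hvt1
  have hnon : Nonempty (Fin (t + 7)) := ⟨⟨3, by omega⟩⟩
  refine ⟨fun v w => ?_⟩
  obtain ⟨nv, hv⟩ := v
  obtain ⟨nw, hw⟩ := w
  exact (hall nv hv hv (by omega)).trans ((hall nw hw hw (by omega)).symm)
end

section
/- If T is a star graph K_{1,n} (n ≥ 1) or a generalized double star GDS(l,m,n), then D_3(T) is disconnected. -/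
/-!
Both trees admit a level function `c : V → ℤ` with `u ~ v ↔ |c u - c v| = 1`. Along a walk
`c` changes by `±1` per step, so two vertices at distance exactly `3` have levels differing by
`±1` or `±3`; the first is impossible, since level difference `1` forces adjacency. Hence `c`
mod `3` is constant on components of `D₃`, while the two ends of any edge differ by `1`.
-/

open SimpleGraph

/-- The star `K_{1,n}`: the center `0` is adjacent to the `n` other vertices. -/
def starGraph (n : ℕ) : SimpleGraph (Fin (n + 1)) :=
  SimpleGraph.fromRel (fun i j => i.val = 0 ∧ j.val ≠ 0)

/-- The generalized double star `GDS(l,m,n)`: two stars `K_{1,m}` and `K_{1,n}` whose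
centers (the vertices `m` and `m + l`) are joined by a path of length `l`.
The vertices `0, …, m-1` are the leaves of the first center, the path is
`m, m+1, …, m+l`, and `m+l+1, …, m+l+n` are the leaves of the second center. -/
def GDS (l m n : ℕ) : SimpleGraph (Fin (m + l + 1 + n)) :=
  SimpleGraph.fromRel (fun i j =>
    (i.val < m ∧ j.val = m) ∨ (m ≤ i.val ∧ i.val < m + l ∧ j.val = i.val + 1) ∨
    (i.val = m + l ∧ m + l < j.val))


/-- Equivalently, `G` is the pullback of the path graph on `ℤ` along `c`. -/
def IsLevelFunction {V : Type*} (G : SimpleGraph V) (c : V → ℤ) : Prop :=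
  ∀ u v, G.Adj u v ↔ |c u - c v| = 1

namespace IsLevelFunction

variable {V : Type*} {G : SimpleGraph V} {c : V → ℤ}

lemma abs_sub_le_length_and_even (hc : IsLevelFunction G c) {u v : V} (w : G.Walk u v) :
    |c v - c u| ≤ w.length ∧ Even ((w.length : ℤ) + (c v - c u)) := by
  induction w with
  | nil => simp
  | @cons x y z hxy _ ih =>
    have hstep := (hc x y).1 hxy
    rw [Walk.length_cons, Nat.cast_succ]
    obtain ⟨hle, k, hk⟩ := ih
    rw [abs_eq zero_le_one] at hstep
    rw [abs_le] at hle ⊢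
    rcases hstep with hstep | hstep
    · exact ⟨by omega, k, by omega⟩
    · exact ⟨by omega, k + 1, by omega⟩

lemma abs_sub_eq_three_of_dist_eq_three (hc : IsLevelFunction G c) {u v : V}
    (h : G.dist u v = 3) : |c u - c v| = 3 := by
  obtain ⟨w, hw⟩ := exists_walk_of_dist_ne_zero (h ▸ three_ne_zero : G.dist u v ≠ 0)
  obtain ⟨hle, k, hk⟩ := hc.abs_sub_le_length_and_even w
  rw [hw, h, abs_le] at hle
  rw [hw, h] at hk
  have hnot_adj : ¬ G.Adj u v := fun hadj => by
    rw [dist_eq_one_iff_adj.2 hadj] at h; omega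
  rw [hc, abs_eq zero_le_one, not_or] at hnot_adj
  rw [abs_eq zero_le_three]
  omega

lemma modEq_three_of_dist_eq_three (hc : IsLevelFunction G c) {u v : V}
    (h : G.dist u v = 3) : c u ≡ c v [ZMOD 3] := by
  have habs := hc.abs_sub_eq_three_of_dist_eq_three h
  rw [abs_eq zero_le_three] at habs
  rw [Int.modEq_iff_dvd]
  omega

lemma modEq_three_of_reachable (hc : IsLevelFunction G c) {u v : V}
    (h : (distGraph G 3).Reachable u v) : c u ≡ c v [ZMOD 3] := by
  obtain ⟨w⟩ := h
  induction w with
  | nil => rfl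
  | cons hxy _ ih => exact (hc.modEq_three_of_dist_eq_three hxy.2).trans ih

lemma not_connected_distGraph_three (hc : IsLevelFunction G c) {u v : V} (huv : G.Adj u v) :
    ¬ (distGraph G 3).Connected := fun hconn => by
  have hmod := hc.modEq_three_of_reachable (hconn.preconnected u v)
  have hstep := (hc u v).1 huv
  rw [Int.modEq_iff_dvd] at hmod
  rw [abs_eq zero_le_one] at hstep
  omega

end IsLevelFunction

def starLevel {n : ℕ} (v : Fin (n + 1)) : ℤ :=
  if v.val = 0 then 0 else 1

lemma isLevelFunction_starLevel (n : ℕ) : IsLevelFunction (_root_.starGraph n) starLevel := by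
  intro u v
  rw [_root_.starGraph, fromRel_adj, Ne, Fin.ext_iff, starLevel, starLevel]
  rw [abs_eq zero_le_one]
  split_ifs <;> omega

/-- Leaves of the first star sit on level `-1`, the path `m, …, m + l` on levels `0, …, l`,
and the leaves of the second star on level `l + 1`. -/
def gdsLevel (l m : ℕ) {N : ℕ} (v : Fin N) : ℤ :=
  if v.val < m then -1 else if v.val ≤ m + l then (v.val : ℤ) - m else l + 1

lemma isLevelFunction_gdsLevel (l m n : ℕ) : IsLevelFunction (GDS l m n) (gdsLevel l m) := by
  intro u v
  have hu := u.isLt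
  have hv := v.isLt
  rw [GDS, fromRel_adj, Ne, Fin.ext_iff, gdsLevel, gdsLevel, abs_eq zero_le_one]
  split_ifs <;> omega

/-- The 3-distance graph of a star `K_{1,n}` (`n ≥ 1`) and of a generalized
double star `GDS(l,m,n)` (`l, m, n ≥ 1`) is disconnected. -/
theorem stmt_4 :
    (∀ n : ℕ, 1 ≤ n → ¬ (distGraph (_root_.starGraph n) 3).Connected) ∧
    (∀ l m n : ℕ, 1 ≤ l → 1 ≤ m → 1 ≤ n → ¬ (distGraph (GDS l m n) 3).Connected) := by
  refine ⟨fun n hn => ?_, fun l m n _ hm _ => ?_⟩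
  · have hadj : (_root_.starGraph n).Adj 0 ⟨1, by omega⟩ := by
      rw [_root_.starGraph, fromRel_adj]; simp [Fin.ext_iff]
    exact (isLevelFunction_starLevel n).not_connected_distGraph_three hadj
  · have hadj : (GDS l m n).Adj ⟨0, by omega⟩ ⟨m, by omega⟩ := by
      rw [GDS, fromRel_adj]; simp [Fin.ext_iff]; omega
    exact (isLevelFunction_gdsLevel l m n).not_connected_distGraph_three hadj
end

section
/- Let G be a unicyclic graph whose unique cycle has length n with n ≥ 7 and gcd(n,3) = 1. Then D_3(G) is connected. -/
/-!
Deleting an edge `ab` of the cycle leaves a spanning tree `T` in which the rest of the cycle is a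
path `p₀ … pₙ₋₁`. If `p_ρ` is the vertex of this path nearest to `x` in `T`, then
`d_G(x, p_i) = d_T(x, p_ρ) + min(|i - ρ|, n - |i - ρ|)`. Hence `p_i` and `p_{i+3 mod n}` are at
distance `3` as soon as `n ≥ 6`, and since `3` is invertible modulo `n` these steps connect all
cycle vertices in `D₃(G)`. Any vertex `x` has a cycle vertex at distance divisible by `3` (at most
two steps away from `p_ρ` along the cycle), to which it is joined in `D₃(G)` through every third
vertex of a geodesic.
-/

open SimpleGraph

/-- A finite graph is *unicyclic* if it is connected and has exactly as many edges as
vertices (equivalently, it is connected and contains exactly one cycle). -/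
def Unicyclic {V : Type*} [Fintype V] [DecidableEq V] (G : SimpleGraph V)
    [DecidableRel G.Adj] : Prop :=
  G.Connected ∧ G.edgeFinset.card = Fintype.card V

namespace SimpleGraph

variable {V : Type*} {G : SimpleGraph V} {x y : V}

lemma Reachable.exists_dist_eq_and_dist_eq (h : G.Reachable x y) {k : ℕ} (hk : k ≤ G.dist x y) :
    ∃ z, G.dist x z = k ∧ G.dist z y = G.dist x y - k := by
  obtain ⟨p, hp⟩ := h.exists_walk_length_eq_dist
  refine ⟨p.getVert k, ?_, ?_⟩
  · rw [← length_eq_dist_of_subwalk hp (p.isSubwalk_take k), Walk.take_length]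
    omega
  · rw [← length_eq_dist_of_subwalk hp (p.isSubwalk_drop k), Walk.drop_length, hp]

lemma IsAcyclic.length_eq_dist_of_isPath (hG : G.IsAcyclic) {p : G.Walk x y} (hp : p.IsPath) :
    p.length = G.dist x y := by
  obtain ⟨q, hq, hqd⟩ := p.reachable.exists_path_of_dist
  have : (⟨p, hp⟩ : G.Path x y) = ⟨q, hq⟩ := (hG.subsingleton_path x y).elim _ _
  rw [← hqd, show p = q from congrArg Subtype.val this]

lemma Walk.IsPath.exists_isPath_getVert {u w : V} {P : G.Walk u w} (hP : P.IsPath) {i j : ℕ}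
    (hij : i ≤ j) (hj : j ≤ P.length) :
    ∃ Q : G.Walk (P.getVert i) (P.getVert j),
      Q.IsPath ∧ Q.length = j - i ∧ Q.support ⊆ P.support := by
  have hend : (P.drop i).getVert (j - i) = P.getVert j := by
    rw [Walk.drop_getVert]; congr 1; omega
  refine ⟨((P.drop i).take (j - i)).copy rfl hend, ?_, ?_, ?_⟩
  · rw [Walk.isPath_copy]; exact (hP.drop i).take _
  · simp only [Walk.length_copy, Walk.take_length, Walk.drop_length]; omega
  · rw [Walk.support_copy]
    exact ((P.drop i).isSubwalk_take _ |>.trans (P.isSubwalk_drop i)).support_subset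

lemma IsAcyclic.dist_eq_dist_add_length (hG : G.IsAcyclic) {r : V} (hxr : G.Reachable x r)
    {Q : G.Walk r y} (hQ : Q.IsPath) (hmin : ∀ z ∈ Q.support, G.dist x r ≤ G.dist x z) :
    G.dist x y = G.dist x r + Q.length := by
  classical
  obtain ⟨W, hW, hWd⟩ := hxr.exists_path_of_dist
  -- a vertex shared by `W` and `Q` other than `r` would be nearer to `x` than `r`
  have hdisj : ∀ z ∈ W.support, z ∉ Q.support.tail := by
    intro z hzW hzQ
    have h1 := dist_le (W.takeUntil z hzW)
    have h2 := dist_le (W.dropUntil z hzW)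
    have h3 : (W.takeUntil z hzW).length + (W.dropUntil z hzW).length = W.length := by
      rw [← Walk.length_append, Walk.take_spec]
    have h4 := hmin z (List.mem_of_mem_tail hzQ)
    have hzr : z = r := ((W.dropUntil z hzW).reachable.dist_eq_zero_iff).1 (by omega)
    have hnodup := hQ.support_nodup
    rw [← Q.cons_tail_support, List.nodup_cons] at hnodup
    exact hnodup.1 (hzr ▸ hzQ)
  have hpath : (W.append Q).IsPath := by
    rw [Walk.isPath_def, Walk.support_append, List.nodup_append]
    exact ⟨hW.support_nodup, hQ.support_nodup.sublist (List.tail_sublist _),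
      fun z hzW z' hzQ h => hdisj z hzW (h ▸ hzQ)⟩
  rw [← hG.length_eq_dist_of_isPath hpath, Walk.length_append, hWd]

lemma IsTree.dist_getVert_eq {u w : V} (hG : G.IsTree) {P : G.Walk u w} (hP : P.IsPath)
    {ρ p : ℕ} (hρ : ρ ≤ P.length) (hp : p ≤ P.length)
    (hmin : ∀ i ≤ P.length, G.dist x (P.getVert ρ) ≤ G.dist x (P.getVert i)) :
    G.dist x (P.getVert p) = G.dist x (P.getVert ρ) + Nat.dist p ρ := by
  have hmin' : ∀ z ∈ P.support, G.dist x (P.getVert ρ) ≤ G.dist x z := by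
    intro z hz
    obtain ⟨i, rfl, hi⟩ := Walk.mem_support_iff_exists_getVert.1 hz
    exact hmin i hi
  rcases le_total ρ p with h | h
  · obtain ⟨Q, hQ, hQl, hQs⟩ := hP.exists_isPath_getVert h hp
    rw [hG.isAcyclic.dist_eq_dist_add_length (hG.connected _ _) hQ (fun z hz => hmin' z (hQs hz)),
      hQl, Nat.dist_eq_sub_of_le_right h]
  · obtain ⟨Q, hQ, hQl, hQs⟩ := hP.exists_isPath_getVert h hρ
    rw [hG.isAcyclic.dist_eq_dist_add_length (hG.connected _ _) hQ.reverse
      (fun z hz => hmin' z (hQs (by simpa using hz))), Walk.length_reverse, hQl,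
      Nat.dist_eq_sub_of_le h]

lemma IsTree.dist_getVert_getVert {u w : V} (hG : G.IsTree) {P : G.Walk u w} (hP : P.IsPath)
    {i j : ℕ} (hi : i ≤ P.length) (hj : j ≤ P.length) :
    G.dist (P.getVert i) (P.getVert j) = Nat.dist j i := by
  rw [hG.dist_getVert_eq hP hi hj (fun _ _ => by simp), dist_self, zero_add]

variable {T : SimpleGraph V} {a b : V}

lemma Walk.min_dist_le_length (hT : T.Connected)
    (hGT : ∀ ⦃p q : V⦄, G.Adj p q → T.Adj p q ∨ s(p, q) = s(a, b)) (W : G.Walk x y) :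
    min (T.dist x y) (min (T.dist x a + 1 + T.dist b y) (T.dist x b + 1 + T.dist a y)) ≤
      W.length := by
  induction W with
  | nil => simp
  | @cons x z y h W ih =>
    rw [Walk.length_cons]
    rcases hGT h with hxz | hxz
    · have := dist_le hxz.toWalk
      have t1 := hT.dist_triangle (u := x) (v := z) (w := y)
      have t2 := hT.dist_triangle (u := x) (v := z) (w := a)
      have t3 := hT.dist_triangle (u := x) (v := z) (w := b)
      simp only [Walk.length_cons, Walk.length_nil] at this
      omega
    · rcases Sym2.eq_iff.1 hxz with ⟨rfl, rfl⟩ | ⟨rfl, rfl⟩ <;> simp only [dist_self] <;> omega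

lemma dist_eq_min_dist_deleteEdges (hab : G.Adj a b) (hT : (G.deleteEdges {s(a, b)}).Connected)
    (x y : V) :
    G.dist x y = min ((G.deleteEdges {s(a, b)}).dist x y)
      (min ((G.deleteEdges {s(a, b)}).dist x a + 1 + (G.deleteEdges {s(a, b)}).dist b y)
        ((G.deleteEdges {s(a, b)}).dist x b + 1 + (G.deleteEdges {s(a, b)}).dist a y)) := by
  have hG : G.Connected := hT.mono (deleteEdges_le _)
  have hle : ∀ p q, G.dist p q ≤ (G.deleteEdges {s(a, b)}).dist p q :=
    fun p q => (hT.preconnected p q).dist_anti (deleteEdges_le _)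
  have hab' : G.dist a b = 1 := dist_eq_one_iff_adj.2 hab
  have hba : G.dist b a = 1 := dist_eq_one_iff_adj.2 hab.symm
  refine le_antisymm ?_ ?_
  · have t1 := hG.dist_triangle (u := x) (v := a) (w := y)
    have t2 := hG.dist_triangle (u := a) (v := b) (w := y)
    have t3 := hG.dist_triangle (u := x) (v := b) (w := y)
    have t4 := hG.dist_triangle (u := b) (v := a) (w := y)
    have := hle x y; have := hle x a; have := hle b y; have := hle x b; have := hle a y
    omega
  · obtain ⟨W, hW⟩ := hG.exists_walk_length_eq_dist x y
    rw [← hW]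
    refine W.min_dist_le_length hT fun p q hpq => ?_
    by_cases he : s(p, q) = s(a, b)
    · exact Or.inr he
    · exact Or.inl (deleteEdges_adj.2 ⟨hpq, he⟩)

lemma reachable_of_forall_reachable_add_mod {f : ℕ → V} {n k : ℕ} (hkn : k.Coprime n)
    (hstep : ∀ i < n, G.Reachable (f i) (f ((i + k) % n))) {j : ℕ} (hj : j < n) :
    G.Reachable (f 0) (f j) := by
  have hmul : ∀ t, G.Reachable (f 0) (f (k * t % n)) := by
    intro t
    induction t with
    | zero => simp
    | succ t ih =>
      have := hstep _ (Nat.mod_lt (k * t) (by omega))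
      rw [Nat.mod_add_mod, ← Nat.mul_succ] at this
      exact ih.trans this
  rcases Nat.lt_or_ge 1 n with hn | hn
  · obtain ⟨m, -, hm⟩ := Nat.exists_mul_mod_eq_one_of_coprime hkn hn
    have hj' : k * (m * j) % n = j := by
      rw [← mul_assoc, Nat.mul_mod, hm, one_mul, Nat.mod_mod, Nat.mod_eq_of_lt hj]
    simpa [hj'] using hmul (m * j)
  · obtain rfl : j = 0 := by omega
    rfl

end SimpleGraph

section

variable {V : Type*} {G : SimpleGraph V}

lemma reachable_distGraph_of_dist_eq_mul (hG : G.Connected) {k : ℕ} :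
    ∀ (t : ℕ) {x y : V}, G.dist x y = k * t → (distGraph G k).Reachable x y
  | 0, x, y, h => by rw [hG.dist_eq_zero_iff.1 (by simpa using h : G.dist x y = 0)]
  | t + 1, x, y, h => by
    obtain ⟨z, hxz, hzy⟩ := Reachable.exists_dist_eq_and_dist_eq (hG.preconnected x y) (k := k)
      (h ▸ Nat.le_mul_of_pos_right k t.succ_pos)
    have hxz' : (distGraph G k).Reachable x z := by
      by_cases hne : x = z
      · exact hne ▸ Reachable.refl x
      · exact Adj.reachable ⟨hne, hxz⟩
    exact hxz'.trans (reachable_distGraph_of_dist_eq_mul hG t (by rw [hzy, h, Nat.mul_succ]; omega))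

lemma Unicyclic.isTree_deleteEdges [Fintype V] [DecidableEq V] [DecidableRel G.Adj]
    (hG : Unicyclic G) {u a b : V} {c : G.Walk u u} (hc : c.IsCycle) (he : s(a, b) ∈ c.edges) :
    (G.deleteEdges {s(a, b)}).IsTree := by
  refine isTree_iff_connected_and_card.2
    ⟨hG.1.connected_delete_edge_of_not_isBridge fun hbr => hbr.notMem_edges_of_isCycle hc he, ?_⟩
  have hpos : 0 < G.edgeFinset.card :=
    Finset.card_pos.2 ⟨s(a, b), mem_edgeFinset.2 (c.edges_subset_edgeSet he)⟩
  rw [edgeSet_deleteEdges, Nat.card_coe_set_eq, Set.ncard_sdiff_singleton_of_mem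
    (c.edges_subset_edgeSet he), Set.ncard_eq_toFinset_card', Set.toFinset_card,
    ← edgeFinset_card, Nat.card_eq_fintype_card, ← hG.2]
  omega

section CyclePath

variable {a b : V} {P : (G.deleteEdges {s(a, b)}).Walk b a}

lemma dist_getVert_of_isTree_deleteEdges (hab : G.Adj a b)
    (hT : (G.deleteEdges {s(a, b)}).IsTree) (hP : P.IsPath) {x : V} {ρ p : ℕ}
    (hρ : ρ ≤ P.length) (hp : p ≤ P.length)
    (hmin : ∀ i ≤ P.length, (G.deleteEdges {s(a, b)}).dist x (P.getVert ρ) ≤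
      (G.deleteEdges {s(a, b)}).dist x (P.getVert i)) :
    G.dist x (P.getVert p) = (G.deleteEdges {s(a, b)}).dist x (P.getVert ρ) +
      min (Nat.dist p ρ) (P.length + 1 - Nat.dist p ρ) := by
  have hxp := hT.dist_getVert_eq hP hρ hp hmin
  have hxa := hT.dist_getVert_eq hP hρ le_rfl hmin
  have hxb := hT.dist_getVert_eq hP hρ (Nat.zero_le _) hmin
  have hap := hT.dist_getVert_getVert hP le_rfl hp
  have hbp := hT.dist_getVert_getVert hP (Nat.zero_le _) hp
  rw [Walk.getVert_length] at hxa hap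
  rw [Walk.getVert_zero] at hxb hbp
  rw [dist_eq_min_dist_deleteEdges hab hT.connected, hxp, hxa, hxb, hap, hbp]
  unfold Nat.dist
  omega

lemma reachable_distGraph_getVert_zero (hab : G.Adj a b)
    (hT : (G.deleteEdges {s(a, b)}).IsTree) (hP : P.IsPath) (hlen : 5 ≤ P.length)
    (hcop : Nat.Coprime 3 (P.length + 1)) {j : ℕ} (hj : j ≤ P.length) :
    (distGraph G 3).Reachable (P.getVert 0) (P.getVert j) := by
  refine reachable_of_forall_reachable_add_mod (f := P.getVert) hcop (fun i hi => ?_) (by omega)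
  have hd := dist_getVert_of_isTree_deleteEdges hab hT hP (x := P.getVert i) (ρ := i)
    (p := (i + 3) % (P.length + 1)) (by omega)
    (Nat.le_of_lt_succ (Nat.mod_lt _ P.length.succ_pos)) (fun _ _ => by simp)
  have hmod : (i + 3) % (P.length + 1) =
      if i + 3 < P.length + 1 then i + 3 else i + 3 - (P.length + 1) := by
    split_ifs with h
    · exact Nat.mod_eq_of_lt h
    · rw [Nat.mod_eq_sub_mod (by omega), Nat.mod_eq_of_lt (by omega)]
  have hd3 : G.dist (P.getVert i) (P.getVert ((i + 3) % (P.length + 1))) = 3 := by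
    rw [hd, dist_self, zero_add, hmod]
    unfold Nat.dist
    split_ifs <;> omega
  exact Adj.reachable ⟨fun h => by simp [h] at hd3, hd3⟩

lemma exists_getVert_reachable_distGraph (hab : G.Adj a b)
    (hT : (G.deleteEdges {s(a, b)}).IsTree) (hP : P.IsPath) (hlen : 3 ≤ P.length) (x : V) :
    ∃ j ≤ P.length, (distGraph G 3).Reachable x (P.getVert j) := by
  obtain ⟨ρ, hρ, hmin⟩ := (Finset.range (P.length + 1)).exists_min_image
    (fun i => (G.deleteEdges {s(a, b)}).dist x (P.getVert i)) ⟨0, by simp⟩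
  simp only [Finset.mem_range] at hρ hmin
  set m := (G.deleteEdges {s(a, b)}).dist x (P.getVert ρ)
  -- the offset `k ≤ 2` with `3 ∣ m + k`
  set k := (3 - m % 3) % 3
  obtain ⟨p, hp, hpρ⟩ : ∃ p ≤ P.length, Nat.dist p ρ = k := by
    rcases le_or_gt (ρ + k) P.length with h | h
    · exact ⟨ρ + k, h, by unfold Nat.dist; omega⟩
    · exact ⟨ρ - k, by omega, by unfold Nat.dist; omega⟩
  have hd := dist_getVert_of_isTree_deleteEdges hab hT hP (by omega) hp
    (fun i hi => hmin i (by omega))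
  refine ⟨p, hp, reachable_distGraph_of_dist_eq_mul (hT.connected.mono (deleteEdges_le _))
    ((m + k) / 3) ?_⟩
  rw [hd, hpρ]
  omega

end CyclePath

end

/-- If `G` is a unicyclic graph whose unique cycle has length `n`, with `n ≥ 7`
and `gcd(n,3) = 1`, then `D₃(G)` is connected. -/
theorem stmt_5 {V : Type*} [Fintype V] [DecidableEq V] (G : SimpleGraph V)
    [DecidableRel G.Adj] (hG : Unicyclic G) (n : ℕ) (hn : 7 ≤ n) (hgcd : Nat.gcd n 3 = 1)
    (hcyc : ∃ (v : V) (c : G.Walk v v), c.IsCycle ∧ c.length = n) :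
    (distGraph G 3).Connected := by
  obtain ⟨v, c, hc, rfl⟩ := hcyc
  cases c with
  | nil => simp at hn
  | @cons _ b _ hvb c' =>
    obtain ⟨hc', hvb'⟩ := (Walk.cons_isCycle_iff c' hvb).1 hc
    have hT := hG.isTree_deleteEdges hc (by simp : s(v, b) ∈ (Walk.cons hvb c').edges)
    set P := c'.toDeleteEdge s(v, b) hvb'
    have hP : P.IsPath := hc'.transfer _
    have hlen : P.length + 1 = (Walk.cons hvb c').length := by simp [P]
    rw [connected_iff_exists_forall_reachable]
    refine ⟨P.getVert 0, fun x => ?_⟩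
    obtain ⟨j, hj, hxj⟩ := exists_getVert_reachable_distGraph hvb hT hP (by omega) x
    have hcop : Nat.Coprime 3 (P.length + 1) := hlen ▸ Nat.coprime_comm.1 hgcd
    exact (reachable_distGraph_getVert_zero hvb hT hP (by omega) hcop hj).trans hxj.symm
end

section
/- Let G be a connected graph in which every pair of inner nodes is at distance divisible by 3, and suppose G is a tree. Then for any inner node a of G, the induced subgraph of D_3(G) on {b ∈ V(G) : 3 | d(a,b)} is a union of connected components of D_3(G); in particular D_3(G) is disconnected when this set is a proper nonempty subset. -/
open SimpleGraph

/-- A vertex `u` is an *inner node* if it has degree ≥ 3 and at least two neighbours of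
degree ≥ 2. -/
def InnerNode {V : Type*} [Fintype V] (G : SimpleGraph V) [DecidableRel G.Adj] (u : V) : Prop :=
  3 ≤ G.degree u ∧ ∃ v w : V, v ≠ w ∧ G.Adj u v ∧ G.Adj u w ∧ 2 ≤ G.degree v ∧ 2 ≤ G.degree w

/-!
Fix an inner node `a` and follow a geodesic `x b c y` of length 3. In a tree, `d(a, ·)` changes
by exactly one along each edge and has no local maximum along a path, so along `x b c y` it either
moves monotonically (changing by 3) or has a local minimum `m` at `b` or `c`. Such an `m` is itself
an inner node: it has two neighbours farther from `a` and one closer, and the relevant neighbours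
have degree at least 2. Hence `3 ∣ d(a, m)`, while `d(a, x) = d(a, m) + 1` or `+ 2`, which rules
out `3 ∣ d(a, x)`. So `3 ∣ d(a, ·)` is preserved along the edges of `D₃(G)`.
-/

namespace SimpleGraph

variable {V : Type*} {G : SimpleGraph V}

theorem Reachable.mem_of_forall_adj_mem {S : Set V} (hS : ∀ u v, G.Adj u v → u ∈ S → v ∈ S)
    {u v : V} (h : G.Reachable u v) (hu : u ∈ S) : v ∈ S := by
  obtain ⟨p⟩ := h
  induction p with
  | nil => exact hu
  | cons huv _ ih => exact ih (hS _ _ huv hu)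

theorem exists_adj_dist_add_one_eq {a v : V} (hv : G.dist a v ≠ 0) :
    ∃ n, G.Adj v n ∧ G.dist a n + 1 = G.dist a v := by
  obtain ⟨p, hp⟩ := exists_walk_of_dist_ne_zero (dist_comm (G := G) ▸ hv)
  cases p with
  | nil => simp at hv
  | cons h q =>
    refine ⟨_, h, ?_⟩
    have hq : G.dist a _ ≤ q.length := dist_comm (G := G) ▸ dist_le q
    rw [Walk.length_cons, dist_comm] at hp
    rcases h.diff_dist_adj (u := a) with hd | hd | hd <;> omega

theorem IsTree.eq_of_adj_of_dist_eq_add_one (hT : G.IsTree) (a : V) {u w v : V}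
    (hu : G.Adj u v) (hw : G.Adj w v)
    (hdu : G.dist a v = G.dist a u + 1) (hdw : G.dist a v = G.dist a w + 1) : u = w := by
  classical
  have not_mem : ∀ {z} (p : G.Walk a z), p.length = G.dist a z → G.dist a z < G.dist a v →
      v ∉ p.support := fun p hp hlt hv => by
    have := dist_le (p.takeUntil v hv)
    have := p.length_takeUntil_le_length hv
    omega
  obtain ⟨p, hp, hpl⟩ := hT.connected.exists_path_of_dist a u
  obtain ⟨q, hq, hql⟩ := hT.connected.exists_path_of_dist a w
  have hpq := (hT.existsUnique_path a v).unique (hp.concat (not_mem p hpl (by omega)) hu)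
    (hq.concat (not_mem q hql (by omega)) hw)
  exact (Walk.concat_inj hpq).1

variable [Fintype V] [DecidableRel G.Adj]

theorem two_le_degree_of_adj {u x y : V} (hx : G.Adj u x) (hy : G.Adj u y) (hxy : x ≠ y) :
    2 ≤ G.degree u := by
  rw [← card_neighborFinset_eq_degree]
  exact Finset.one_lt_card.mpr ⟨x, by simpa, y, by simpa, hxy⟩

theorem IsTree.innerNode_of_adj_of_adj (hT : G.IsTree) {a m p q : V} (ha : InnerNode G a)
    (hmp : G.Adj m p) (hmq : G.Adj m q) (hpq : p ≠ q)
    (hp : G.dist a p = G.dist a m + 1) (hq : G.dist a q = G.dist a m + 1)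
    (hq2 : 2 ≤ G.degree q) : InnerNode G m := by
  by_cases hma : m = a
  · exact hma ▸ ha
  obtain ⟨n, hmn, hn⟩ := exists_adj_dist_add_one_eq
    (mt hT.connected.dist_eq_zero_iff.mp (Ne.symm hma))
  have hn2 : 2 ≤ G.degree n := by
    by_cases hna : n = a
    · exact hna ▸ ha.1.trans' (by norm_num)
    obtain ⟨n', hnn', hn'⟩ := exists_adj_dist_add_one_eq
      (mt hT.connected.dist_eq_zero_iff.mp (Ne.symm hna))
    exact two_le_degree_of_adj hnn' hmn.symm (by rintro rfl; omega)
  have hdeg : 3 ≤ G.degree m := by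
    rw [← card_neighborFinset_eq_degree]
    exact Finset.two_lt_card.mpr ⟨p, by simpa, q, by simpa, n, by simpa,
      hpq, by rintro rfl; omega, by rintro rfl; omega⟩
  exact ⟨hdeg, q, n, by rintro rfl; omega, hmq, hmn, hq2, hn2⟩

theorem IsTree.three_dvd_dist_of_dist_eq_three (hT : G.IsTree)
    (hdiv : ∀ u v : V, InnerNode G u → InnerNode G v → 3 ∣ G.dist u v)
    {a : V} (ha : InnerNode G a) {x y : V} (hxy : G.dist x y = 3)
    (hx : 3 ∣ G.dist a x) : 3 ∣ G.dist a y := by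
  obtain ⟨b, c, hxb, hbc, hcy⟩ : ∃ b c, G.Adj x b ∧ G.Adj b c ∧ G.Adj c y := by
    obtain ⟨p, hp⟩ := hT.connected.exists_walk_length_eq_dist x y
    rw [hxy] at hp
    rcases p with _ | ⟨h₁, _ | ⟨h₂, _ | ⟨h₃, _ | ⟨_, _⟩⟩⟩⟩ <;> simp at hp
    exact ⟨_, _, h₁, h₂, h₃⟩
  have hxc : x ≠ c := by rintro rfl; simp [dist_eq_one_iff_adj.mpr hcy] at hxy
  have hby : b ≠ y := by rintro rfl; simp [dist_eq_one_iff_adj.mpr hxb] at hxy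
  rcases hT.dist_eq_dist_add_one_of_adj a hxb with hbx | hxb'
  · rcases hT.dist_eq_dist_add_one_of_adj a hbc with hcb | hbc'
    · rcases hT.dist_eq_dist_add_one_of_adj a hcy with hyc | hcy'
      · omega
      · have := hdiv a c ha (hT.innerNode_of_adj_of_adj ha hcy hbc.symm hby.symm hcy' hcb
          (two_le_degree_of_adj hxb.symm hbc hxc))
        omega
    · have := hdiv a b ha (hT.innerNode_of_adj_of_adj ha hxb.symm hbc hxc hbx hbc'
        (two_le_degree_of_adj hbc.symm hcy hby))
      omega
  · have hbc' : G.dist a c = G.dist a b + 1 :=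
      (hT.dist_eq_dist_add_one_of_adj a hbc).resolve_left
        fun h => hxc (hT.eq_of_adj_of_dist_eq_add_one a hxb hbc.symm hxb' h)
    have hcy' : G.dist a y = G.dist a c + 1 :=
      (hT.dist_eq_dist_add_one_of_adj a hcy).resolve_left
        fun h => hby (hT.eq_of_adj_of_dist_eq_add_one a hbc hcy.symm hbc' h)
    omega

end SimpleGraph

/-- Let `G` be a tree in which every pair of inner nodes is at distance
divisible by 3, and let `a` be an inner node. Then the set `{b : 3 ∣ d(a,b)}` is a union
of connected components of `D₃(G)`; in particular, if it is a proper subset of the vertex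
set, `D₃(G)` is disconnected. -/
theorem stmt_10 {V : Type*} [Fintype V] (G : SimpleGraph V) [DecidableRel G.Adj]
    (hT : G.IsTree)
    (hdiv : ∀ u v : V, InnerNode G u → InnerNode G v → 3 ∣ G.dist u v)
    (a : V) (ha : InnerNode G a) :
    (∀ b ∈ {b : V | 3 ∣ G.dist a b},
      ((distGraph G 3).connectedComponentMk b).supp ⊆ {b : V | 3 ∣ G.dist a b}) ∧
    ({b : V | 3 ∣ G.dist a b} ≠ Set.univ → ¬ (distGraph G 3).Connected) := by
  have hclosed : ∀ u v, (distGraph G 3).Adj u v →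
      u ∈ {b : V | 3 ∣ G.dist a b} → v ∈ {b : V | 3 ∣ G.dist a b} :=
    fun _ _ huv => hT.three_dvd_dist_of_dist_eq_three hdiv ha huv.2
  refine ⟨fun b hb c hc => (ConnectedComponent.exact hc).symm.mem_of_forall_adj_mem hclosed hb,
    fun hne hconn => ?_⟩
  obtain ⟨c, hc⟩ := (Set.ne_univ_iff_exists_notMem _).mp hne
  exact hc ((hconn a c).mem_of_forall_adj_mem hclosed (by simp))
end

section
/- Let G be a graph containing two vertices x, y with N(x) \ {y} = N(y) \ {x} (x and y have the same neighbours apart from each other). Then D_3(G) is connected if and only if D_3(G − x) is connected, provided G has at least 3 vertices. -/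
open SimpleGraph

/-!
Twins `x`, `y` are interchangeable in walks: merging `x` into `y` sends every edge to an edge
or to a single vertex, so it does not increase distances. Hence deleting `x` preserves the
distances between the remaining vertices, `d(x, v) = d(y, v)` for every other vertex `v`, and
`d(x, y) ≤ 2`. So `D₃(G − x)` is the subgraph of `D₃(G)` induced on `V ∖ {x}`, and in `D₃(G)`
the vertices `x` and `y` have the same neighbourhood. Deleting one of two such vertices
preserves connectivity once a third vertex exists: the remaining one then has a neighbour,
which the deleted one shares.
-/

namespace SimpleGraph

variable {V W : Type*}

lemma edist_le_edist_of_adj_or_eq {G : SimpleGraph V} {H : SimpleGraph W} (f : V → W)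
    (hf : ∀ ⦃a b⦄, G.Adj a b → H.Adj (f a) (f b) ∨ f a = f b) (u v : V) :
    H.edist (f u) (f v) ≤ G.edist u v := by
  by_cases hr : G.Reachable u v
  · obtain ⟨p, hp⟩ := hr.exists_walk_length_eq_edist
    rw [← hp]
    clear hp hr
    induction p with
    | nil => simp
    | @cons a b c hab p ih =>
      calc H.edist (f a) (f c) ≤ H.edist (f a) (f b) + H.edist (f b) (f c) :=
          SimpleGraph.edist_triangle
        _ ≤ 1 + p.length := add_le_add (edist_le_one_iff_adj_or_eq.2 (hf hab)) ih
        _ = (Walk.cons hab p).length := by simp [add_comm]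
  · simp [edist_eq_top_of_not_reachable hr]

section Twins

variable {G : SimpleGraph V} {x y : V}

lemma adj_of_adj_of_neighborSet_sdiff_eq (hnbr : G.neighborSet x \ {y} = G.neighborSet y \ {x})
    {a : V} (hxa : G.Adj x a) (hay : a ≠ y) : G.Adj y a :=
  (hnbr ▸ ⟨hxa, hay⟩ : a ∈ G.neighborSet y \ {x}).1

lemma adj_or_eq_of_merge [DecidableEq V] (hnbr : G.neighborSet x \ {y} = G.neighborSet y \ {x})
    ⦃a b : V⦄ (hab : G.Adj a b) :
    G.Adj (if a = x then y else a) (if b = x then y else b) ∨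
      (if a = x then y else a) = (if b = x then y else b) := by
  split_ifs with ha hb hb
  · exact (hab.ne (ha.trans hb.symm)).elim
  · subst ha
    by_cases hby : b = y
    · exact .inr hby.symm
    · exact .inl (adj_of_adj_of_neighborSet_sdiff_eq hnbr hab hby)
  · subst hb
    by_cases hay : a = y
    · exact .inr hay
    · exact .inl (adj_of_adj_of_neighborSet_sdiff_eq hnbr hab.symm hay).symm
  · exact .inl hab

lemma edist_le_edist_of_neighborSet_sdiff_eq
    (hnbr : G.neighborSet x \ {y} = G.neighborSet y \ {x}) {v : V} (hvx : v ≠ x) :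
    G.edist y v ≤ G.edist x v := by
  classical
  simpa [hvx] using edist_le_edist_of_adj_or_eq _ (adj_or_eq_of_merge hnbr) x v

lemma dist_eq_dist_of_neighborSet_sdiff_eq
    (hnbr : G.neighborSet x \ {y} = G.neighborSet y \ {x}) {v : V} (hvx : v ≠ x) (hvy : v ≠ y) :
    G.dist x v = G.dist y v := by
  rw [dist, dist, le_antisymm (edist_le_edist_of_neighborSet_sdiff_eq hnbr.symm hvy)
    (edist_le_edist_of_neighborSet_sdiff_eq hnbr hvx)]

lemma dist_le_two_of_neighborSet_sdiff_eq
    (hnbr : G.neighborSet x \ {y} = G.neighborSet y \ {x}) : G.dist x y ≤ 2 := by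
  by_contra! hfar
  have hr : G.Reachable x y := Reachable.of_dist_ne_zero (by omega)
  obtain ⟨-, hnadj, hcommon⟩ :=
    two_lt_edist_iff.1 (by rw [← hr.coe_dist_eq_edist]; exact_mod_cast hfar)
  obtain ⟨p⟩ := hr
  have hxb : G.Adj x p.snd := p.adj_snd (Walk.not_nil_of_ne (by rintro rfl; simp at hfar))
  have hby : p.snd ≠ y := by rintro h; exact hnadj (h ▸ hxb)
  exact hcommon.subset ⟨hxb, adj_of_adj_of_neighborSet_sdiff_eq hnbr hxb hby⟩

lemma dist_induce_ne_eq (hnbr : G.neighborSet x \ {y} = G.neighborSet y \ {x}) (hxy : x ≠ y)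
    (u v : {v | v ≠ x}) : (G.induce {v | v ≠ x}).dist u v = G.dist u v := by
  classical
  let merge (v : V) : {v | v ≠ x} :=
    ⟨if v = x then y else v, by split_ifs with h; exacts [hxy.symm, h]⟩
  have hmerge (w : {v | v ≠ x}) : merge w = w := Subtype.ext (if_neg w.2)
  have hle := edist_le_edist_of_adj_or_eq (H := G.induce {v | v ≠ x}) merge
    (fun _ _ hab ↦ (adj_or_eq_of_merge hnbr hab).imp id Subtype.ext) u v
  have hge := edist_le_edist_of_adj_or_eq (G := G.induce {v | v ≠ x}) Subtype.val
    (fun _ _ hab ↦ .inl hab) u v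
  rw [hmerge, hmerge] at hle
  rw [dist, dist, le_antisymm hle hge]

end Twins

theorem connected_iff_connected_induce_ne_of_neighborSet_eq {D : SimpleGraph V} {x y : V}
    (hxy : x ≠ y) (hN : D.neighborSet x = D.neighborSet y) (hw : ∃ w, w ≠ x ∧ w ≠ y) :
    D.Connected ↔ (D.induce {v | v ≠ x}).Connected := by
  classical
  constructor
  · intro hc
    let retract (v : V) : {v | v ≠ x} := if h : v = x then ⟨y, hxy.symm⟩ else ⟨v, h⟩
    have hretract ⦃a b : V⦄ (hab : D.Adj a b) :
        (D.induce {v | v ≠ x}).Adj (retract a) (retract b) := by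
      simp only [retract, comap_adj, Function.Embedding.subtype_apply]
      split_ifs with ha hb hb
      · exact (hab.ne (ha.trans hb.symm)).elim
      · exact (hN ▸ (ha ▸ hab : b ∈ D.neighborSet x) : b ∈ D.neighborSet y)
      · exact (hN ▸ (hb ▸ hab.symm : a ∈ D.neighborSet x) : a ∈ D.neighborSet y).symm
      · exact hab
    exact hc.map ⟨retract, fun hab ↦ hretract hab⟩
      fun v ↦ ⟨v, show retract v = v from dif_neg v.2⟩
  · intro hc
    have hreach (v : V) (hv : v ≠ x) : D.Reachable y v :=
      (hc.preconnected ⟨y, hxy.symm⟩ ⟨v, hv⟩).map (Embedding.induce _).toHom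
    obtain ⟨w, hwx, hwy⟩ := hw
    have : Nontrivial {v | v ≠ x} :=
      ⟨⟨y, hxy.symm⟩, ⟨w, hwx⟩, fun h ↦ hwy (congrArg Subtype.val h).symm⟩
    obtain ⟨⟨z, hzx⟩, hyz⟩ := hc.preconnected.exists_adj_of_nontrivial ⟨y, hxy.symm⟩
    have hxz : D.Adj x z := (hN ▸ (hyz : z ∈ D.neighborSet y) : z ∈ D.neighborSet x)
    refine (connected_iff_exists_forall_reachable D).2 ⟨y, fun v ↦ ?_⟩
    by_cases hv : v = x
    · exact hv ▸ (hreach z hzx).trans hxz.symm.reachable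
    · exact hreach v hv

end SimpleGraph

lemma distGraph_induce_of_dist_eq {V : Type*} {G : SimpleGraph V} {s : Set V}
    (h : ∀ u v : s, (G.induce s).dist u v = G.dist u v) (k : ℕ) :
    distGraph (G.induce s) k = (distGraph G k).induce s := by
  ext u v
  simp [distGraph, h, Subtype.ext_iff]

lemma neighborSet_distGraph_eq_of_neighborSet_sdiff_eq {V : Type*} {G : SimpleGraph V} {x y : V}
    (hnbr : G.neighborSet x \ {y} = G.neighborSet y \ {x}) {k : ℕ} (hk : 3 ≤ k) :
    (distGraph G k).neighborSet x = (distGraph G k).neighborSet y := by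
  ext v
  change x ≠ v ∧ G.dist x v = k ↔ y ≠ v ∧ G.dist y v = k
  by_cases hvx : v = x
  · have := dist_le_two_of_neighborSet_sdiff_eq hnbr.symm
    subst hvx
    simp only [ne_eq, not_true_eq_false, false_and, false_iff, not_and]
    omega
  by_cases hvy : v = y
  · have := dist_le_two_of_neighborSet_sdiff_eq hnbr
    subst hvy
    simp only [ne_eq, not_true_eq_false, false_and, iff_false, not_and]
    omega
  rw [dist_eq_dist_of_neighborSet_sdiff_eq hnbr hvx hvy]
  simp [Ne.symm hvx, Ne.symm hvy]

/-- If `x ≠ y` are vertices with the same neighbours apart from each other,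
and `G` has at least 3 vertices, then `D₃(G)` is connected iff `D₃(G − x)` is connected. -/
theorem stmt_14 {V : Type*} [Fintype V] (G : SimpleGraph V) (x y : V) (hxy : x ≠ y)
    (hnbr : G.neighborSet x \ {y} = G.neighborSet y \ {x})
    (hcard : 3 ≤ Fintype.card V) :
    (distGraph G 3).Connected ↔
      (distGraph (G.induce {v : V | v ≠ x}) 3).Connected := by
  classical
  obtain ⟨w, hw, hwy⟩ := Finset.exists_mem_ne (s := Finset.univ.erase x)
    (by rw [Finset.card_erase_of_mem (Finset.mem_univ x), Finset.card_univ]; omega) y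
  rw [distGraph_induce_of_dist_eq (dist_induce_ne_eq hnbr hxy)]
  exact connected_iff_connected_induce_ne_of_neighborSet_eq hxy
    (neighborSet_distGraph_eq_of_neighborSet_sdiff_eq hnbr le_rfl)
    ⟨w, Finset.ne_of_mem_erase hw, hwy⟩
end
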